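/- Let α be irrational with partial quotients a_n, convergents p_n/q_n, and z_n = q_nα − p_n; let n be even. On ℝ/ℤ define I_n^0 = [0, |z_{n+1}|), I_n^i = [|z_n| − (i−1)|z_{n+1}|, |z_n| − (i−2)|z_{n+1}|) for 1 ≤ i ≤ a_{n+2}, and I_n^* = [|z_{n+1}|, |z_{n+1}| + |z_{n+2}|), and let T x = x + α (mod 1). Then: T^{q_n}(I_n^0) = I_n^1; T^{q_{n+1}}(I_n^i) = I_n^{i+1} for i = 1, …, a_{n+2} − 1; T^{q_{n+1}}(I_n^{a_{n+2}}) ⊆ I_n^* ∪ I_n^0; and T^{q_{n+1}}(I_n^*) ⊆ I_n^0. -/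

import Mathlib

/-- Gauss map iterates of `α`: `x₀ = {α}`, `x_{n+1} = {1/x_n}`. -/
noncomputable def gaussIter (α : ℝ) : ℕ → ℝ
  | 0 => Int.fract α
  | n + 1 => Int.fract (gaussIter α n)⁻¹

/-- `cfa α n` is the partial quotient `a_{n+1} = ⌊1/x_n⌋` of the continued fraction of `α`. -/
noncomputable def cfa (α : ℝ) (n : ℕ) : ℕ := ⌊(gaussIter α n)⁻¹⌋₊

/-- Denominators `q_n` of the continued fraction convergents of `α`:
`q₀ = 1`, `q₁ = a₁`, `q_{n+2} = a_{n+2} q_{n+1} + q_n`. -/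
noncomputable def cfq (α : ℝ) : ℕ → ℕ
  | 0 => 1
  | 1 => cfa α 0
  | n + 2 => cfa α (n + 1) * cfq α (n + 1) + cfq α n

/-- Numerators `p_n` of the continued fraction convergents of `α`:
`p₀ = ⌊α⌋`, `p₁ = a₁⌊α⌋ + 1`, `p_{n+2} = a_{n+2} p_{n+1} + p_n`. -/
noncomputable def cfp (α : ℝ) : ℕ → ℤ
  | 0 => ⌊α⌋
  | 1 => cfa α 0 * ⌊α⌋ + 1
  | n + 2 => cfa α (n + 1) * cfp α (n + 1) + cfp α n

/-- `z_n = q_n α - p_n`. -/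
noncomputable def cfz (α : ℝ) (n : ℕ) : ℝ := (cfq α n : ℝ) * α - (cfp α n : ℝ)

/-- The arc `[c, d) (mod 1)` on the circle `ℝ/ℤ`. -/
noncomputable def arc (c d : ℝ) : Set (AddCircle (1 : ℝ)) :=
  (fun t : ℝ => (t : AddCircle (1 : ℝ))) '' Set.Ico c d

/-!
Rotation by `q_m α` on `ℝ/ℤ` is rotation by `z_m`, so it translates the arc `[c, d)` to
`[c + z_m, d + z_m)`. With `x_k` the Gauss iterates, `z_m = (-1)^m x_0 ⋯ x_m`; hence for even `n`
we have `z_n = |z_n|`, `z_{n+1} = -|z_{n+1}|`, and the recursion `z_{n+2} = a_{n+2} z_{n+1} + z_n`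
reads `|z_{n+2}| = |z_n| - a_{n+2} |z_{n+1}|`. Each claim is then an identity or an inclusion
between arcs with explicit endpoints.
-/

theorem Irrational.fract {x : ℝ} (h : Irrational x) : Irrational (Int.fract x) :=
  h.sub_intCast _

theorem Irrational.fract_pos {x : ℝ} (h : Irrational x) : 0 < Int.fract x :=
  (Int.fract_nonneg x).lt_of_ne h.fract.ne_zero.symm

theorem gaussIter_lt_one (α : ℝ) : ∀ n, gaussIter α n < 1
  | 0 => Int.fract_lt_one _
  | _ + 1 => Int.fract_lt_one _

section GaussIter

variable {α : ℝ}

theorem irrational_gaussIter (hα : Irrational α) : ∀ n, Irrational (gaussIter α n)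
  | 0 => hα.fract
  | n + 1 => (irrational_gaussIter hα n).inv.fract

theorem gaussIter_pos (hα : Irrational α) : ∀ n, 0 < gaussIter α n
  | 0 => hα.fract_pos
  | n + 1 => (irrational_gaussIter hα n).inv.fract_pos

theorem gaussIter_mul_gaussIter_succ (hα : Irrational α) (m : ℕ) :
    gaussIter α m * gaussIter α (m + 1) = 1 - cfa α m * gaussIter α m := by
  have hx := gaussIter_pos hα m
  have hsucc : gaussIter α (m + 1) = (gaussIter α m)⁻¹ - ⌊(gaussIter α m)⁻¹⌋ := rfl
  have hcfa : (cfa α m : ℝ) = ⌊(gaussIter α m)⁻¹⌋ := natCast_floor_eq_intCast_floor (by positivity)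
  rw [hsucc, hcfa, mul_sub, mul_inv_cancel₀ hx.ne']
  ring

end GaussIter

theorem cfz_add_two (α : ℝ) (n : ℕ) :
    cfz α (n + 2) = cfa α (n + 1) * cfz α (n + 1) + cfz α n := by
  simp only [cfz, cfq, cfp]
  push_cast
  ring

theorem coe_cfq_mul_eq_coe_cfz (α : ℝ) (n : ℕ) :
    (((cfq α n : ℝ) * α : ℝ) : AddCircle (1 : ℝ)) = (cfz α n : AddCircle (1 : ℝ)) := by
  have hp : ((cfp α n : ℝ) : AddCircle (1 : ℝ)) = 0 :=
    (AddCircle.coe_eq_zero_iff 1).2 ⟨cfp α n, by simp⟩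
  rw [cfz, AddCircle.coe_sub, hp, sub_zero]

section Cfz

variable {α : ℝ}

theorem cfz_eq_neg_one_pow_mul_prod (hα : Irrational α) (n : ℕ) :
    cfz α n = (-1) ^ n * ∏ k ∈ Finset.range (n + 1), gaussIter α k := by
  induction n using Nat.twoStepInduction with
  | zero =>
    have h0 : gaussIter α 0 = α - ⌊α⌋ := rfl
    simp [cfz, cfq, cfp, h0]
  | one =>
    have h : gaussIter α 0 * gaussIter α 1 = 1 - cfa α 0 * gaussIter α 0 :=
      gaussIter_mul_gaussIter_succ hα 0
    have h0 : gaussIter α 0 = α - ⌊α⌋ := rfl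
    simp only [cfz, cfq, cfp, Finset.prod_range_succ, Finset.prod_range_zero]
    push_cast
    linear_combination h - (cfa α 0 : ℝ) * h0
  | more n ih₁ ih₂ =>
    rw [cfz_add_two, ih₁, ih₂, Finset.prod_range_succ (n := n + 2),
      Finset.prod_range_succ (n := n + 1)]
    linear_combination (-(-1 : ℝ) ^ n * ∏ k ∈ Finset.range (n + 1), gaussIter α k) *
      gaussIter_mul_gaussIter_succ hα (n + 1)

theorem abs_cfz (hα : Irrational α) (n : ℕ) :
    |cfz α n| = ∏ k ∈ Finset.range (n + 1), gaussIter α k := by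
  rw [cfz_eq_neg_one_pow_mul_prod hα, abs_mul, abs_neg_one_pow, one_mul,
    abs_of_pos (Finset.prod_pos fun k _ => gaussIter_pos hα k)]

theorem abs_cfz_pos (hα : Irrational α) (n : ℕ) : 0 < |cfz α n| :=
  abs_cfz hα n ▸ Finset.prod_pos fun k _ => gaussIter_pos hα k

theorem abs_cfz_succ_lt (hα : Irrational α) (n : ℕ) : |cfz α (n + 1)| < |cfz α n| := by
  rw [abs_cfz hα, abs_cfz hα, Finset.prod_range_succ]
  exact mul_lt_of_lt_one_right (Finset.prod_pos fun k _ => gaussIter_pos hα k)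
    (gaussIter_lt_one α _)

theorem cfz_of_even (hα : Irrational α) {n : ℕ} (hn : Even n) : cfz α n = |cfz α n| := by
  rw [abs_cfz hα, cfz_eq_neg_one_pow_mul_prod hα, hn.neg_one_pow, one_mul]

theorem cfz_of_odd (hα : Irrational α) {n : ℕ} (hn : Odd n) : cfz α n = -|cfz α n| := by
  rw [abs_cfz hα, cfz_eq_neg_one_pow_mul_prod hα, hn.neg_one_pow, neg_one_mul]

end Cfz

theorem image_add_coe_arc (c d t : ℝ) :
    (· + (t : AddCircle (1 : ℝ))) '' arc c d = arc (c + t) (d + t) := by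
  unfold arc
  rw [Set.image_image, ← Set.image_add_const_Ico t c d, Set.image_image]
  exact Set.image_congr fun x _ => (AddCircle.coe_add (p := 1) x t).symm

theorem arc_mono {c d c' d' : ℝ} (hc : c' ≤ c) (hd : d ≤ d') : arc c d ⊆ arc c' d' :=
  Set.image_mono (Set.Ico_subset_Ico hc hd)

theorem arc_union_arc {b c d : ℝ} (hbc : b ≤ c) (hcd : c ≤ d) :
    arc b c ∪ arc c d = arc b d := by
  rw [arc, arc, ← Set.image_union, Set.Ico_union_Ico_eq_Ico hbc hcd, arc]

/-- Precise images of the subintervals `I_n⁰`, `I_nⁱ`, `I_n^*` of `I_n` under the first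
return maps `T^{q_n}` and `T^{q_{n+1}}` (for even `n`); here `a_{n+2} = cfa α (n+1)`. -/
theorem statement13 (α : ℝ) (hα : Irrational α) (n : ℕ) (hn : Even n)
    (In0 : Set (AddCircle (1 : ℝ))) (hIn0 : In0 = arc 0 |cfz α (n + 1)|)
    (Ini : ℕ → Set (AddCircle (1 : ℝ)))
    (hIni : ∀ i : ℕ, Ini i =
      arc (|cfz α n| - ((i : ℝ) - 1) * |cfz α (n + 1)|)
          (|cfz α n| - ((i : ℝ) - 2) * |cfz α (n + 1)|))
    (Instar : Set (AddCircle (1 : ℝ)))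
    (hInstar : Instar = arc (|cfz α (n + 1)|) (|cfz α (n + 1)| + |cfz α (n + 2)|))
    (Tpow : ℕ → AddCircle (1 : ℝ) → AddCircle (1 : ℝ))
    (hT : ∀ k y, Tpow k y = y + (((k : ℝ) * α : ℝ) : AddCircle (1 : ℝ))) :
    Tpow (cfq α n) '' In0 = Ini 1 ∧
    (∀ i : ℕ, 1 ≤ i → i + 1 ≤ cfa α (n + 1) → Tpow (cfq α (n + 1)) '' Ini i = Ini (i + 1)) ∧
    Tpow (cfq α (n + 1)) '' Ini (cfa α (n + 1)) ⊆ Instar ∪ In0 ∧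
    Tpow (cfq α (n + 1)) '' Instar ⊆ In0 := by
  have hrot (m : ℕ) (c d : ℝ) :
      Tpow (cfq α m) '' arc c d = arc (c + cfz α m) (d + cfz α m) := by
    have hTq : Tpow (cfq α m) = (· + (cfz α m : AddCircle (1 : ℝ))) :=
      funext fun y => by rw [hT, coe_cfq_mul_eq_coe_cfz]
    rw [hTq, image_add_coe_arc]
  set A := |cfz α n|
  set B := |cfz α (n + 1)|
  set C := |cfz α (n + 2)|
  have hA : cfz α n = A := cfz_of_even hα hn
  have hB : cfz α (n + 1) = -B := cfz_of_odd hα hn.add_one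
  have hC : C = A - cfa α (n + 1) * B := by
    have hC' : cfz α (n + 2) = C := cfz_of_even hα (hn.add even_two)
    rw [← hC', cfz_add_two, hA, hB]
    ring
  have hC_pos : 0 < C := abs_cfz_pos hα (n + 2)
  have hC_lt : C < B := abs_cfz_succ_lt hα (n + 1)
  refine ⟨?_, fun i _ _ => ?_, ?_, ?_⟩
  · rw [hIn0, hIni, hrot, hA]
    congr 1 <;> push_cast <;> ring
  · rw [hIni, hIni, hrot, hB]
    congr 1 <;> push_cast <;> ring
  · rw [hIni, hrot, hB, hInstar, hIn0, Set.union_comm,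
      arc_union_arc (abs_cfz_pos hα (n + 1)).le (by linarith)]
    apply arc_mono <;> linarith
  · rw [hInstar, hrot, hB, hIn0]
    apply arc_mono <;> linarith
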